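/- Let H be a real Hilbert space and E, F : H → ℝ twice continuously differentiable. Suppose ȳ ∈ H, c₀ > 0, ε ≥ 0 and L > 0 satisfy: (i) ∇E(ȳ) = 0 and ⟪Hess E(ȳ) v, v⟫ ≥ c₀‖v‖² for all v ∈ H (strong stability); (ii) ‖∇F(ȳ)‖ ≤ ε (consistency); (iii) ‖Hess F(ȳ) − Hess E(ȳ)‖ ≤ c₀/2 in operator norm; (iv) ‖Hess F(x) − Hess F(y)‖ ≤ L‖x − y‖ for all x, y in the closed ball of radius 4ε/c₀ around ȳ; and (v) 16Lε ≤ c₀². Then there exists ȳ_F ∈ H with ∇F(ȳ_F) = 0, ‖ȳ − ȳ_F‖ ≤ 4ε/c₀, and ⟪Hess F(ȳ_F) v, v⟫ ≥ (c₀/4)‖v‖² for all v ∈ H. -/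

import Mathlib

/-!
The Hessian `A` of `F` at `ȳ` is within `c₀/2` of the `c₀`-coercive `Hess E(ȳ)`, hence
`(c₀/2)`-coercive and, by Lax–Milgram, onto with a right inverse of norm at most `2/c₀`.
On the ball of radius `r = 4ε/c₀` the Lipschitz bound keeps `Hess F` within `L r ≤ c₀/4` of `A`,
so `∇F` approximates `A` there, and the quantitative surjectivity behind the inverse function
theorem gives a zero of `∇F` in the ball because `‖∇F(ȳ)‖ ≤ ε = (c₀/2 - c₀/4) r`.
At that zero `Hess F` is still within `c₀/4` of `A`, hence `(c₀/4)`-coercive.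
-/

open scoped RealInnerProductSpace NNReal

open Metric

theorem ContDiff.gradient {H : Type*} [NormedAddCommGroup H] [InnerProductSpace ℝ H]
    [CompleteSpace H] {f : H → ℝ} {m n : WithTop ℕ∞} (hf : ContDiff ℝ n f) (hmn : m + 1 ≤ n) :
    ContDiff ℝ m (gradient f) :=
  (InnerProductSpace.toDual ℝ H).symm.contDiff.comp (hf.fderiv_right hmn)

theorem Convex.approximatesLinearOn_of_norm_fderiv_sub_le {E F : Type*}
    [NormedAddCommGroup E] [NormedSpace ℝ E] [NormedAddCommGroup F] [NormedSpace ℝ F]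
    {f : E → F} {f' : E →L[ℝ] F} {s : Set E} {K : ℝ≥0} (hs : Convex ℝ s)
    (hf : ∀ x ∈ s, DifferentiableAt ℝ f x) (bound : ∀ x ∈ s, ‖fderiv ℝ f x - f'‖ ≤ K) :
    ApproximatesLinearOn f f' s K :=
  fun _ hx _ hy => hs.norm_image_sub_le_of_norm_fderiv_le' hf bound hy hx

namespace ContinuousLinearMap

variable {H : Type*} [NormedAddCommGroup H] [InnerProductSpace ℝ H]

theorem mul_norm_sq_le_inner_of_norm_sub_le {A B : H →L[ℝ] H} {c c' : ℝ}
    (hB : ∀ v, c * ‖v‖ ^ 2 ≤ ⟪B v, v⟫) (hAB : ‖A - B‖ ≤ c - c') (v : H) :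
    c' * ‖v‖ ^ 2 ≤ ⟪A v, v⟫ := by
  have hdiff : |⟪(A - B) v, v⟫| ≤ (c - c') * ‖v‖ ^ 2 :=
    calc |⟪(A - B) v, v⟫| ≤ ‖(A - B) v‖ * ‖v‖ := abs_real_inner_le_norm _ _
      _ ≤ ‖A - B‖ * ‖v‖ * ‖v‖ := by gcongr; exact (A - B).le_opNorm v
      _ ≤ (c - c') * ‖v‖ ^ 2 := by rw [mul_assoc, ← sq]; gcongr
  rw [sub_apply, inner_sub_left] at hdiff
  linarith [(abs_le.mp hdiff).1, hB v]

theorem mul_norm_le_norm_apply_of_coercive {A : H →L[ℝ] H} {c : ℝ}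
    (hA : ∀ v, c * ‖v‖ ^ 2 ≤ ⟪A v, v⟫) (v : H) : c * ‖v‖ ≤ ‖A v‖ := by
  rcases (norm_nonneg v).eq_or_lt with hv | hv
  · rw [← hv, mul_zero]; exact norm_nonneg _
  · refine le_of_mul_le_mul_right ?_ hv
    calc c * ‖v‖ * ‖v‖ = c * ‖v‖ ^ 2 := by ring
      _ ≤ ⟪A v, v⟫ := hA v
      _ ≤ ‖A v‖ * ‖v‖ := real_inner_le_norm _ _

variable [CompleteSpace H]

theorem surjective_of_coercive {A : H →L[ℝ] H} {c : ℝ} (hc : 0 < c)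
    (hA : ∀ v, c * ‖v‖ ^ 2 ≤ ⟪A v, v⟫) : Function.Surjective A := by
  have coercive : IsCoercive ((innerSL ℝ).comp A) :=
    ⟨c, hc, fun u => by simpa [sq, mul_assoc] using hA u⟩
  intro y
  set e := coercive.continuousLinearEquivOfBilin
  refine ⟨e.symm y, ext_inner_right ℝ fun w => ?_⟩
  simpa [e] using (coercive.continuousLinearEquivOfBilin_apply (e.symm y) w).symm

noncomputable def nonlinearRightInverseOfCoercive (A : H →L[ℝ] H) {c : ℝ} (hc : 0 < c)
    (hA : ∀ v, c * ‖v‖ ^ 2 ≤ ⟪A v, v⟫) : A.NonlinearRightInverse where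
  toFun := Function.surjInv (surjective_of_coercive hc hA)
  nnnorm := c.toNNReal⁻¹
  bound' y := by
    have hsurj := surjective_of_coercive hc hA
    have hbound := mul_norm_le_norm_apply_of_coercive hA (Function.surjInv hsurj y)
    rw [Function.surjInv_eq hsurj] at hbound
    rwa [NNReal.coe_inv, Real.coe_toNNReal _ hc.le, inv_mul_eq_div, le_div_iff₀ hc, mul_comm]
  right_inv' := Function.surjInv_eq _

theorem exists_mem_closedBall_eq_zero_of_approximatesLinearOn {A : H →L[ℝ] H} {c r : ℝ}
    {K : ℝ≥0} {g : H → H} {b : H} (hc : 0 < c) (hA : ∀ v, c * ‖v‖ ^ 2 ≤ ⟪A v, v⟫)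
    (hg : ApproximatesLinearOn g A (closedBall b r) K) (hr : 0 ≤ r) (hgb : ‖g b‖ ≤ (c - K) * r) :
    ∃ x ∈ closedBall b r, g x = 0 := by
  have hsurj := hg.surjOn_closedBall_of_nonlinearRightInverse
    (A.nonlinearRightInverseOfCoercive hc hA) hr subset_rfl
  simp only [nonlinearRightInverseOfCoercive, NNReal.coe_inv, Real.coe_toNNReal _ hc.le,
    inv_inv] at hsurj
  exact hsurj (by rwa [mem_closedBall, dist_comm, dist_zero_right])

end ContinuousLinearMap

theorem stmt_1_general
    {H : Type*} [NormedAddCommGroup H] [InnerProductSpace ℝ H] [CompleteSpace H]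
    (E F : H → ℝ) (hF : ContDiff ℝ 2 F)
    (ybar : H) (c₀ ε L : ℝ) (hc₀ : 0 < c₀) (hL : 0 < L)
    (hstab : ∀ v : H, ⟪fderiv ℝ (gradient E) ybar v, v⟫ ≥ c₀ * ‖v‖ ^ 2)
    (hcons : ‖gradient F ybar‖ ≤ ε)
    (hhess : ‖fderiv ℝ (gradient F) ybar - fderiv ℝ (gradient E) ybar‖ ≤ c₀ / 2)
    (hLip : ∀ x ∈ Metric.closedBall ybar (4 * ε / c₀), ∀ y ∈ Metric.closedBall ybar (4 * ε / c₀),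
      ‖fderiv ℝ (gradient F) x - fderiv ℝ (gradient F) y‖ ≤ L * ‖x - y‖)
    (hsmall : 16 * L * ε ≤ c₀ ^ 2) :
    ∃ yF : H, gradient F yF = 0 ∧ ‖ybar - yF‖ ≤ 4 * ε / c₀ ∧
      ∀ v : H, ⟪fderiv ℝ (gradient F) yF v, v⟫ ≥ (c₀ / 4) * ‖v‖ ^ 2 := by
  set r := 4 * ε / c₀
  set A := fderiv ℝ (gradient F) ybar
  have hr : 0 ≤ r := by have := (norm_nonneg _).trans hcons; positivity
  have hLr : L * r ≤ c₀ / 4 := by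
    rw [mul_div_assoc', div_le_div_iff₀ hc₀ four_pos]; nlinarith
  have hHessF_near : ∀ z ∈ closedBall ybar r, ‖fderiv ℝ (gradient F) z - A‖ ≤ L * r := fun z hz =>
    (hLip z hz ybar (mem_closedBall_self hr)).trans
      (mul_le_mul_of_nonneg_left (mem_closedBall_iff_norm.mp hz) hL.le)
  have hA : ∀ v, c₀ / 2 * ‖v‖ ^ 2 ≤ ⟪A v, v⟫ :=
    ContinuousLinearMap.mul_norm_sq_le_inner_of_norm_sub_le hstab (hhess.trans_eq (by ring))
  have hgb : ‖gradient F ybar‖ ≤ (c₀ / 2 - L * r) * r :=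
    calc ‖gradient F ybar‖ ≤ ε := hcons
      _ = (c₀ / 2 - c₀ / 4) * r := by simp only [r]; field_simp; ring
      _ ≤ (c₀ / 2 - L * r) * r := by gcongr
  have happrox : ApproximatesLinearOn (gradient F) A (closedBall ybar r) ⟨L * r, by positivity⟩ :=
    (convex_closedBall ybar r).approximatesLinearOn_of_norm_fderiv_sub_le
      (fun z _ => ((hF.gradient (by norm_num)).differentiable one_ne_zero) z) hHessF_near
  obtain ⟨yF, hyF, hzero⟩ :=
    ContinuousLinearMap.exists_mem_closedBall_eq_zero_of_approximatesLinearOn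
      (by positivity) hA happrox hr hgb
  refine ⟨yF, hzero, by rwa [norm_sub_rev, ← mem_closedBall_iff_norm], fun v => ?_⟩
  exact ContinuousLinearMap.mul_norm_sq_le_inner_of_norm_sub_le hA
    ((hHessF_near yF hyF).trans (by linarith)) v

/-- Abstract stability-plus-consistency error estimate: skeleton of the
geometry-error bound of Theorem 3.1. -/
theorem stmt_1
    {H : Type*} [NormedAddCommGroup H] [InnerProductSpace ℝ H] [CompleteSpace H]
    (E F : H → ℝ) (hE : ContDiff ℝ 2 E) (hF : ContDiff ℝ 2 F)
    (ybar : H) (c₀ ε L : ℝ) (hc₀ : 0 < c₀) (hε : 0 ≤ ε) (hL : 0 < L)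
    (hcrit : gradient E ybar = 0)
    (hstab : ∀ v : H, ⟪fderiv ℝ (gradient E) ybar v, v⟫ ≥ c₀ * ‖v‖ ^ 2)
    (hcons : ‖gradient F ybar‖ ≤ ε)
    (hhess : ‖fderiv ℝ (gradient F) ybar - fderiv ℝ (gradient E) ybar‖ ≤ c₀ / 2)
    (hLip : ∀ x ∈ Metric.closedBall ybar (4 * ε / c₀), ∀ y ∈ Metric.closedBall ybar (4 * ε / c₀),
      ‖fderiv ℝ (gradient F) x - fderiv ℝ (gradient F) y‖ ≤ L * ‖x - y‖)
    (hsmall : 16 * L * ε ≤ c₀ ^ 2) :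
    ∃ yF : H, gradient F yF = 0 ∧ ‖ybar - yF‖ ≤ 4 * ε / c₀ ∧
      ∀ v : H, ⟪fderiv ℝ (gradient F) yF v, v⟫ ≥ (c₀ / 4) * ‖v‖ ^ 2 :=
  stmt_1_general E F hF ybar c₀ ε L hc₀ hL hstab hcons hhess hLip hsmall
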